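/- arXiv:2209.04936 — 3 statements merged into one kernel-verified Lean document; each statement's English description precedes it below -/
import Mathlib

section
/- Let X, Y : ℕ → ℕ be 0/1 sequences supported on {1,…,|X|} and {1,…,|Y|} respectively, and define Ŷ by Ŷ_i = 1 − Y_{|Y|−i+1} for 1 ≤ i ≤ |Y|. Let R be the convolution R_i = Σ_{j, 1 ≤ j ≤ |X|, 1 ≤ i−j ≤ |Y|} X_j · Ŷ_{i−j}. Then for any integer α with 1−|X| ≤ α ≤ |Y|−1, R_{|Y|+1−α} equals the number of indices i with 1 ≤ i ≤ |Y|, 1 ≤ i−α ≤ |X|, Y_i = 0, and X_{i−α} = 1. -/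
lemma mul_one_sub_eq_ite_of_le_one {x y : ℕ} (hx : x ≤ 1) (hy : y ≤ 1) :
    x * (1 - y) = if y = 0 ∧ x = 1 then 1 else 0 := by
  interval_cases x <;> interval_cases y <;> rfl

theorem stmt4_general (nx ny : ℕ)
    (X Y Yhat R : ℤ → ℕ)
    (hX01 : ∀ i, X i ≤ 1) (hY01 : ∀ i, Y i ≤ 1)
    (hYhat : ∀ i : ℤ, 1 ≤ i → i ≤ (ny : ℤ) → Yhat i = 1 - Y ((ny : ℤ) - i + 1))
    (hR : ∀ i : ℤ, R i =
      ∑ j ∈ (Finset.Icc (1 : ℤ) (nx : ℤ)).filter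
          (fun j => 1 ≤ i - j ∧ i - j ≤ (ny : ℤ)),
        X j * Yhat (i - j)) :
    ∀ α : ℤ, 1 - (nx : ℤ) ≤ α → α ≤ (ny : ℤ) - 1 →
      R ((ny : ℤ) + 1 - α) =
        ((Finset.Icc (1 : ℤ) (ny : ℤ)).filter
          (fun i => 1 ≤ i - α ∧ i - α ≤ (nx : ℤ) ∧ Y i = 0 ∧ X (i - α) = 1)).card := by
  intro α _ _
  rw [hR]
  -- reflection: `Ŷ (ny + 1 - α - j) = 1 - Y (α + j)`
  have hterm : ∀ j ∈ (Finset.Icc (1 : ℤ) nx).filter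
      (fun j => 1 ≤ (ny : ℤ) + 1 - α - j ∧ (ny : ℤ) + 1 - α - j ≤ ny),
      X j * Yhat ((ny : ℤ) + 1 - α - j) = if Y (α + j) = 0 ∧ X j = 1 then 1 else 0 := by
    intro j hj
    obtain ⟨-, hlo, hhi⟩ := Finset.mem_filter.mp hj
    rw [hYhat _ hlo hhi, show (ny : ℤ) - (ny + 1 - α - j) + 1 = α + j by ring]
    exact mul_one_sub_eq_ite_of_le_one (hX01 j) (hY01 (α + j))
  rw [Finset.sum_congr rfl hterm, Finset.sum_boole, Nat.cast_id, Finset.filter_filter]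
  refine Finset.card_nbij' (α + ·) (· - α) ?_ ?_ (fun _ _ => by simp) (fun _ _ => by simp)
  · intro j hj
    simp only [Finset.coe_filter, Finset.mem_Icc, Set.mem_ofPred_eq, add_sub_cancel_left] at hj ⊢
    omega
  · intro i hi
    simp only [Finset.coe_filter, Finset.mem_Icc, Set.mem_ofPred_eq, add_sub_cancel] at hi ⊢
    omega

/-- The convolution identity behind the `0`-asymmetric-flip-detector: for 0/1 sequences
`X` (supported on `[1, nx]`) and `Y` (supported on `[1, ny]`), with `Ŷ_i = 1 - Y_{ny-i+1}`
and `R` the convolution of `X` and `Ŷ`, the entry `R_{ny+1-α}` counts the indices `i` with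
`1 ≤ i ≤ ny`, `1 ≤ i-α ≤ nx`, `Y_i = 0` and `X_{i-α} = 1`. -/
theorem stmt4 (nx ny : ℕ) (hnx : 1 ≤ nx) (hny : 1 ≤ ny)
    (X Y Yhat R : ℤ → ℕ)
    (hX01 : ∀ i, X i ≤ 1) (hY01 : ∀ i, Y i ≤ 1)
    (hXsupp : ∀ i, X i ≠ 0 → 1 ≤ i ∧ i ≤ (nx : ℤ))
    (hYsupp : ∀ i, Y i ≠ 0 → 1 ≤ i ∧ i ≤ (ny : ℤ))
    (hYhat : ∀ i : ℤ, 1 ≤ i → i ≤ (ny : ℤ) → Yhat i = 1 - Y ((ny : ℤ) - i + 1))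
    (hR : ∀ i : ℤ, R i =
      ∑ j ∈ (Finset.Icc (1 : ℤ) (nx : ℤ)).filter
          (fun j => 1 ≤ i - j ∧ i - j ≤ (ny : ℤ)),
        X j * Yhat (i - j)) :
    ∀ α : ℤ, 1 - (nx : ℤ) ≤ α → α ≤ (ny : ℤ) - 1 →
      R ((ny : ℤ) + 1 - α) =
        ((Finset.Icc (1 : ℤ) (ny : ℤ)).filter
          (fun i => 1 ≤ i - α ∧ i - α ≤ (nx : ℤ) ∧ Y i = 0 ∧ X (i - α) = 1)).card :=
  stmt4_general nx ny X Y Yhat R hX01 hY01 hYhat hR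
end

section
/- Let k ≥ 2 and r ≥ 1, and for weights w_1,…,w_{k−1} ∈ [0,r] and w_k ∈ [0,r], define subset-sum item weights u_i = (k^{k+1} + k^i)·r + w_i for i < k and u_k = (k^{k+1} + k^k)·r − w_k. Then Σ_{i=1}^k u_i = f^Q(k) := Σ_{i=1}^k (k^{k+1} + k^i)·r if and only if w_1 + w_2 + ⋯ + w_{k−1} − w_k = 0. -/
/-! Peel off the last item: the first `k - 1` items contribute their base weights plus `∑ w_i`,
and the last contributes its base weight minus `w_k`, with no truncation since `w_k ≤ r`.
The base weights cancel against the target, leaving `∑ w_i = w_k`. -/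

theorem Finset.sum_add_add_tsub_eq_sum_add_iff {ι : Type*} (s : Finset ι) (c w : ι → ℕ)
    {C x : ℕ} (hx : x ≤ C) :
    ∑ i ∈ s, (c i + w i) + (C - x) = ∑ i ∈ s, c i + C ↔ ∑ i ∈ s, w i = x := by
  rw [Finset.sum_add_distrib]
  omega

theorem stmt10_general (k r : ℕ) (hk : 2 ≤ k) (w u : ℕ → ℕ)
    (hw : ∀ i, 1 ≤ i → i ≤ k → w i ≤ r)
    (hu1 : ∀ i, 1 ≤ i → i ≤ k - 1 → u i = (k ^ (k + 1) + k ^ i) * r + w i)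
    (hu2 : u k = (k ^ (k + 1) + k ^ k) * r - w k) :
    (∑ i ∈ Finset.Icc 1 k, u i = ∑ i ∈ Finset.Icc 1 k, (k ^ (k + 1) + k ^ i) * r) ↔
      ∑ i ∈ Finset.Icc 1 (k - 1), w i = w k := by
  obtain ⟨m, rfl⟩ : ∃ m, k = m + 1 := ⟨k - 1, by omega⟩
  have hwk : w (m + 1) ≤ ((m + 1) ^ (m + 1 + 1) + (m + 1) ^ (m + 1)) * r :=
    (hw _ (by omega) le_rfl).trans (Nat.le_mul_of_pos_left r (by positivity))
  rw [Nat.add_sub_cancel] at hu1 ⊢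
  rw [Finset.sum_Icc_succ_top (by omega), Finset.sum_Icc_succ_top (by omega), hu2,
    Finset.sum_congr rfl fun i hi => hu1 i (Finset.mem_Icc.mp hi).1 (Finset.mem_Icc.mp hi).2]
  exact Finset.sum_add_add_tsub_eq_sum_add_iff _ _ _ hwk

/-- Encoding correctness for the k-sum-to-subset-sum reduction: with
`u_i = (k^{k+1}+k^i)·r + w_i` for `i < k` and `u_k = (k^{k+1}+k^k)·r − w_k`
(for weights `w_i ∈ [0,r]`), we have `Σ_{i=1}^k u_i = Σ_{i=1}^k (k^{k+1}+k^i)·r` iff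
`w_1 + ⋯ + w_{k−1} = w_k`. -/
theorem stmt10 (k r : ℕ) (hk : 2 ≤ k) (hr : 1 ≤ r) (w u : ℕ → ℕ)
    (hw : ∀ i, 1 ≤ i → i ≤ k → w i ≤ r)
    (hu1 : ∀ i, 1 ≤ i → i ≤ k - 1 → u i = (k ^ (k + 1) + k ^ i) * r + w i)
    (hu2 : u k = (k ^ (k + 1) + k ^ k) * r - w k) :
    (∑ i ∈ Finset.Icc 1 k, u i = ∑ i ∈ Finset.Icc 1 k, (k ^ (k + 1) + k ^ i) * r) ↔
      ∑ i ∈ Finset.Icc 1 (k - 1), w i = w k :=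
  stmt10_general k r hk w u hw hu1 hu2
end

section
/- Let w_1, …, w_n be nonnegative integers and t ≥ 0. If for some weight w there are more than ⌊t/w⌋ items of weight w (with w ≥ 1), then for every target s ≤ t, some subset of items sums to s if and only if some subset of the items obtained by keeping only ⌊t/w⌋ copies of weight w (and all other items) sums to s. -/
/-! Any subset summing to at most `t` contains at most `⌊t/v⌋` items of weight `v`, so it already
lives in the trimmed multiset; conversely the trimmed multiset is a sub-multiset of `W`. -/

namespace Multiset

section Trim

variable {α : Type*} [DecidableEq α]

theorem count_filter_ne_add_replicate (W : Multiset α) (v : α) (n : ℕ) (x : α) :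
    count x (W.filter (· ≠ v) + replicate n v) = if x = v then n else count x W := by
  by_cases hx : x = v
  · subst hx
    simp
  · simp [hx, mem_replicate]

theorem filter_ne_add_replicate_le {W : Multiset α} {v : α} {n : ℕ} (h : n ≤ W.count v) :
    W.filter (· ≠ v) + replicate n v ≤ W := by
  refine le_iff_count.mpr fun x => ?_
  rw [count_filter_ne_add_replicate]
  split_ifs with hx
  · exact hx ▸ h
  · exact le_rfl

theorem le_filter_ne_add_replicate {S W : Multiset α} {v : α} {n : ℕ} (hSW : S ≤ W)
    (hS : S.count v ≤ n) : S ≤ W.filter (· ≠ v) + replicate n v := by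
  refine le_iff_count.mpr fun x => ?_
  rw [count_filter_ne_add_replicate]
  split_ifs with hx
  · exact hx ▸ hS
  · exact count_le_of_le x hSW

end Trim

theorem count_mul_le_sum (S : Multiset ℕ) (v : ℕ) : S.count v * v ≤ S.sum := by
  obtain ⟨R, hR⟩ := le_iff_exists_add.mp (le_count_iff_replicate_le.mp (le_refl (S.count v)))
  calc S.count v * v = (replicate (S.count v) v).sum := by simp
    _ ≤ (replicate (S.count v) v + R).sum := by rw [sum_add]; exact Nat.le_add_right _ _
    _ = S.sum := congrArg sum hR.symm

theorem count_le_div_of_sum_le {S : Multiset ℕ} {v t : ℕ} (hv : 1 ≤ v) (hS : S.sum ≤ t) :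
    S.count v ≤ t / v :=
  (Nat.le_div_iff_mul_le hv).mpr ((count_mul_le_sum S v).trans hS)

end Multiset

open Multiset in
/-- Redundancy elimination in dynamic subset sum: if there are more than `⌊t/v⌋` items of
weight `v ≥ 1` in the multiset `W` of item weights, then for every target `s ≤ t`, some
sub-multiset of `W` sums to `s` iff some sub-multiset of the multiset obtained from `W`
by keeping only `⌊t/v⌋` copies of weight `v` (and all other items) sums to `s`. -/
theorem stmt19 (W : Multiset ℕ) (t v : ℕ) (hv : 1 ≤ v)
    (hcount : t / v < W.count v) :
    ∀ s ≤ t,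
      (∃ S ≤ W, S.sum = s) ↔
      (∃ S ≤ W.filter (fun x => x ≠ v) + Multiset.replicate (t / v) v, S.sum = s) := by
  intro s hs
  constructor
  · rintro ⟨S, hSW, rfl⟩
    exact ⟨S, le_filter_ne_add_replicate hSW (count_le_div_of_sum_le hv hs), rfl⟩
  · rintro ⟨S, hS, rfl⟩
    exact ⟨S, hS.trans (filter_ne_add_replicate_le hcount.le), rfl⟩
end
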